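/- arXiv:1601.05875 — 5 statements merged into one kernel-verified Lean document; each statement's English description precedes it below -/
import Mathlib

section
/- For any set $A \subseteq \mathbb{R}^n$ with $0 < V_n(A) < \infty$, any convex set $B \subseteq \mathbb{R}^n$, and any nonsingular matrix $M \in \mathbb{R}^{n\times n}$, the erosion entropy is invariant under simultaneous linear transformation: $h_{\ominus MB}(MA) = h_{\ominus B}(A)$. -/
open MeasureTheory Set Pointwise

/-- Erosion of `A` by `B`: `{x | B + x ⊆ A}`. -/
def erode {n : ℕ} (A B : Set (Fin n → ℝ)) : Set (Fin n → ℝ) :=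
  {x | ∀ b ∈ B, b + x ∈ A}

/-- Erosion entropy of `A` by `B`. -/
noncomputable def erosEnt {n : ℕ} (A B : Set (Fin n → ℝ)) : ℝ :=
  ∫ t : ℝ, ((if 0 ≤ t then (1 : ℝ) else 0)
    - (volume (erode A ((2 : ℝ) ^ (-t) • B))).toReal / (volume A).toReal)

lemma erode_image {n : ℕ} (A B : Set (Fin n → ℝ)) (M : Matrix (Fin n) (Fin n) ℝ)
    (hM : IsUnit M.det) :
    erode (M.mulVec '' A) (M.mulVec '' B) = M.mulVec '' erode A B := by
  have hMu : IsUnit M := (Matrix.isUnit_iff_isUnit_det M).2 hM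
  have hinj : Function.Injective M.mulVec := Matrix.mulVec_injective_iff_isUnit.2 hMu
  have hsurj : Function.Surjective M.mulVec := Matrix.mulVec_surjective_iff_isUnit.2 hMu
  ext x
  obtain ⟨y, rfl⟩ := hsurj x
  constructor
  · intro h
    refine ⟨y, fun b hb => ?_, rfl⟩
    have := h (M.mulVec b) ⟨b, hb, rfl⟩
    rw [← Matrix.mulVec_add] at this
    obtain ⟨a, ha, hae⟩ := this
    rwa [← hinj hae]
  · rintro ⟨z, hz, hze⟩
    have hzy : z = y := hinj hze
    rintro b ⟨b', hb', rfl⟩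
    exact ⟨b' + y, hzy ▸ hz b' hb', Matrix.mulVec_add M b' y⟩

lemma smul_image_mulVec {n : ℕ} (c : ℝ) (B : Set (Fin n → ℝ))
    (M : Matrix (Fin n) (Fin n) ℝ) :
    c • (M.mulVec '' B) = M.mulVec '' (c • B) := by
  rw [← Set.image_smul, ← Set.image_smul, Set.image_image, Set.image_image]
  exact Set.image_congr fun b _ => (M.mulVec_smul c b).symm

lemma volume_image_mulVec {n : ℕ} (S : Set (Fin n → ℝ)) (M : Matrix (Fin n) (Fin n) ℝ) :
    volume (M.mulVec '' S) = ENNReal.ofReal |M.det| * volume S := by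
  have : M.mulVec '' S = (Matrix.toLin' M) '' S := by
    apply Set.image_congr
    intro a _
    simp [Matrix.toLin'_apply]
  rw [this, MeasureTheory.Measure.addHaar_image_linearMap, LinearMap.det_toLin']

theorem erosEnt_linear {n : ℕ} (A B : Set (Fin n → ℝ))
    (hA0 : 0 < volume A) (hAfin : volume A < ⊤) (hB : Convex ℝ B)
    (M : Matrix (Fin n) (Fin n) ℝ) (hM : IsUnit M.det) :
    erosEnt (M.mulVec '' A) (M.mulVec '' B) = erosEnt A B := by
  have hd : (0 : ℝ) < |M.det| := abs_pos.2 (by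
    intro h; rw [h] at hM; exact (by simpa using hM.ne_zero rfl))
  unfold erosEnt
  congr 1
  funext t
  congr 1
  rw [smul_image_mulVec, erode_image _ _ _ hM, volume_image_mulVec, volume_image_mulVec,
    ENNReal.toReal_mul, ENNReal.toReal_mul, ENNReal.toReal_ofReal hd.le,
    mul_div_mul_left _ _ hd.ne']
end

section
/- For every integer $n \ge 1$ and real $\nu > en$, the upper incomplete gamma function satisfies $\Gamma(n+1, \nu) < e^{-(e-2)n} \cdot \Gamma(n+1)$. -/
/-! The tail `Γ(n+1, ν)` is at most `B ν^n e^{-ν}` with `B = e/(e-1)`, by comparing the integrand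
with the derivative of `-B t^n e^{-t}`. Since `t^n e^{-t}` decreases for `t ≥ n`, this is at most
`B (en)^n e^{-en} < e (en)^n e^{-en} = e^{-(e-2)n} n^n e^{-(n-1)}`, and `n^n e^{-(n-1)} ≤ n!`. -/

open MeasureTheory Set

/-- The upper incomplete gamma function `Γ(a,z) = ∫_z^∞ t^(a-1) e^(-t) dt`. -/
noncomputable def uGamma (a z : ℝ) : ℝ := ∫ t in Ioi z, t ^ (a - 1) * Real.exp (-t)

open Filter Real
open scoped Nat Topology

lemma integrableOn_rpow_mul_exp_neg_Ioi {p z : ℝ} (hp : -1 < p) (hz : 0 ≤ z) :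
    IntegrableOn (fun t : ℝ => t ^ p * exp (-t)) (Ioi z) := by
  have h := GammaIntegral_convergent (s := p + 1) (by linarith)
  simp only [add_sub_cancel_right] at h
  exact (h.congr_fun (fun t _ => mul_comm _ _) measurableSet_Ioi).mono_set (Ioi_subset_Ioi hz)

theorem uGamma_le_mul_rpow_mul_exp_neg {a B z : ℝ} (ha : 1 < a) (hB : 1 < B)
    (hz : B * (a - 1) ≤ (B - 1) * z) :
    uGamma a z ≤ B * (z ^ (a - 1) * exp (-z)) := by
  have hz0 : 0 < z :=
    pos_of_mul_pos_right ((mul_pos (by linarith) (by linarith)).trans_le hz) (by linarith)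
  set F' : ℝ → ℝ := fun t =>
    B * (t ^ (a - 1) * exp (-t)) - B * (a - 1) * (t ^ (a - 1 - 1) * exp (-t))
  have hderiv : ∀ t ∈ Ici z, HasDerivAt (fun t => -(B * (t ^ (a - 1) * exp (-t)))) (F' t) t := by
    intro t ht
    have hexp : HasDerivAt (fun t : ℝ => exp (-t)) (-exp (-t)) t := by
      simpa using (hasDerivAt_neg t).exp
    refine (((hasDerivAt_rpow_const (Or.inl (hz0.trans_le ht).ne')).mul
      hexp).const_mul B).neg.congr_deriv ?_
    simp only [F']
    ring
  have hF'int : IntegrableOn F' (Ioi z) :=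
    ((integrableOn_rpow_mul_exp_neg_Ioi (by linarith) hz0.le).const_mul B).sub
      ((integrableOn_rpow_mul_exp_neg_Ioi (by linarith) hz0.le).const_mul (B * (a - 1)))
  have hlim : Tendsto (fun t => -(B * (t ^ (a - 1) * exp (-t)))) atTop (𝓝 0) := by
    simpa using ((tendsto_rpow_mul_exp_neg_mul_atTop_nhds_zero (a - 1) 1 one_pos).const_mul B).neg
  have hFTC : ∫ t in Ioi z, F' t = B * (z ^ (a - 1) * exp (-z)) := by
    simpa using integral_Ioi_of_hasDerivAt_of_tendsto' hderiv hF'int hlim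
  rw [← hFTC]
  refine setIntegral_mono_on (integrableOn_rpow_mul_exp_neg_Ioi (by linarith) hz0.le) hF'int
    measurableSet_Ioi fun t (ht : z < t) => ?_
  have ht0 : 0 < t := hz0.trans ht
  have hdiff : F' t - t ^ (a - 1) * exp (-t) =
      t ^ (a - 1 - 1) * exp (-t) * ((B - 1) * t - B * (a - 1)) := by
    simp only [F', rpow_sub_one ht0.ne' (a - 1)]
    field_simp
    ring
  have hgap : 0 ≤ (B - 1) * t - B * (a - 1) := by nlinarith
  linarith [mul_nonneg (by positivity : 0 ≤ t ^ (a - 1 - 1) * exp (-t)) hgap]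

theorem rpow_mul_exp_neg_le_of_le {p a x : ℝ} (hp : 0 ≤ p) (ha : 0 < a) (hpa : p ≤ a)
    (hax : a ≤ x) : x ^ p * exp (-x) ≤ a ^ p * exp (-a) := by
  have hx : 0 < x := ha.trans_le hax
  have hratio : (x / a) ^ p ≤ exp (x - a) :=
    calc (x / a) ^ p ≤ exp (x / a - 1) ^ p :=
          rpow_le_rpow (by positivity) (by linarith [add_one_le_exp (x / a - 1)]) hp
      _ = exp (p * (x / a - 1)) := by rw [← exp_mul, mul_comm]
      _ ≤ exp (a * (x / a - 1)) :=
          exp_le_exp.mpr (mul_le_mul_of_nonneg_right hpa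
            (sub_nonneg.mpr ((one_le_div ha).mpr hax)))
      _ = exp (x - a) := by rw [mul_sub, mul_div_cancel₀ x ha.ne', mul_one]
  calc x ^ p * exp (-x) = a ^ p * ((x / a) ^ p * exp (-x)) := by
        rw [div_rpow hx.le ha.le]
        field_simp
    _ ≤ a ^ p * (exp (x - a) * exp (-x)) := by gcongr
    _ = a ^ p * exp (-a) := by rw [← exp_add]; ring_nf

theorem pow_mul_exp_neg_le_factorial {n : ℕ} (hn : 1 ≤ n) :
    (n : ℝ) ^ n * exp (-(n - 1)) ≤ n ! := by
  induction n, hn using Nat.le_induction with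
  | base => simp
  | succ m hm ih =>
    have hm0 : (0 : ℝ) < m := by exact_mod_cast hm
    have hstep : ((m : ℝ) + 1) ^ m ≤ exp 1 * m ^ m :=
      calc ((m : ℝ) + 1) ^ m = m ^ m * (1 + (m : ℝ)⁻¹) ^ m := by
            rw [← mul_pow, mul_add, mul_inv_cancel₀ hm0.ne', mul_one, add_comm]
        _ ≤ m ^ m * exp 1 := by gcongr; exact one_add_inv_pow_le_exp
        _ = exp 1 * m ^ m := mul_comm _ _
    push_cast [Nat.factorial_succ]
    calc ((m : ℝ) + 1) ^ (m + 1) * exp (-((m : ℝ) + 1 - 1))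
        = (m + 1) * (((m : ℝ) + 1) ^ m * exp (-m)) := by rw [pow_succ]; ring_nf
      _ ≤ (m + 1) * ((exp 1 * m ^ m) * exp (-m)) := by gcongr
      _ = (m + 1) * (m ^ m * exp (-(m - 1))) := by
          rw [show -((m : ℝ) - 1) = 1 + -m by ring, exp_add]; ring
      _ ≤ (m + 1) * m ! := by gcongr

theorem uGamma_tail_bound (n : ℕ) (hn : 1 ≤ n) (ν : ℝ) (hν : Real.exp 1 * n < ν) :
    uGamma (n + 1) ν < Real.exp (-(Real.exp 1 - 2) * n) * Real.Gamma (n + 1) := by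
  have he : 2 < exp 1 := by linarith [exp_one_gt_d9]
  have hn0 : (0 : ℝ) < n := by exact_mod_cast hn
  set B := exp 1 / (exp 1 - 1)
  have hB1 : 1 < B := (one_lt_div (by linarith)).mpr (by linarith)
  have hBe : B < exp 1 := (div_lt_iff₀ (by linarith)).mpr (by nlinarith)
  have hB : B = exp 1 * (B - 1) := by
    rw [div_sub_one (by linarith), sub_sub_cancel, mul_one_div]
  calc uGamma (n + 1) ν ≤ B * (ν ^ ((n : ℝ) + 1 - 1) * exp (-ν)) := by
        refine uGamma_le_mul_rpow_mul_exp_neg (by linarith) hB1 ?_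
        rw [add_sub_cancel_right]
        calc B * n = (B - 1) * (exp 1 * n) := by linear_combination (n : ℝ) * hB
          _ ≤ (B - 1) * ν := mul_le_mul_of_nonneg_left hν.le (by linarith)
    _ ≤ B * ((exp 1 * n) ^ (n : ℝ) * exp (-(exp 1 * n))) := by
        rw [add_sub_cancel_right]
        gcongr ?_ * ?_
        exact rpow_mul_exp_neg_le_of_le hn0.le (by positivity) (by nlinarith) hν.le
    _ < exp 1 * ((exp 1 * n) ^ (n : ℝ) * exp (-(exp 1 * n))) := by gcongr
    _ = exp (-(exp 1 - 2) * n) * ((n : ℝ) ^ n * exp (-(n - 1))) := by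
        have hexp : exp 1 * exp n * exp (-(exp 1 * n)) =
            exp (-(exp 1 - 2) * n) * exp (-(n - 1)) := by
          simp only [← exp_add]
          ring_nf
        rw [rpow_natCast, mul_pow, exp_one_pow]
        linear_combination (n : ℝ) ^ n * hexp
    _ ≤ exp (-(exp 1 - 2) * n) * Gamma (n + 1) := by
        rw [Gamma_nat_eq_factorial]
        gcongr
        exact pow_mul_exp_neg_le_factorial hn
end

section
/- For $a > 1$, $B > 1$, and $z > B(a-1)/(B-1)$, the upper incomplete gamma function satisfies $\Gamma(a, z) < B z^{a-1} e^{-z}$. -/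
open MeasureTheory Set Filter Topology

theorem uGamma_lt (a B z : ℝ) (ha : 1 < a) (hB : 1 < B) (hz : B * (a - 1) / (B - 1) < z) :
    uGamma a z < B * z ^ (a - 1) * Real.exp (-z) := by
  have ha1 : (0:ℝ) < a - 1 := by linarith
  have hB1 : (0:ℝ) < B - 1 := by linarith
  have hz' : B * (a - 1) < (B - 1) * z := by
    rwa [div_lt_iff₀ hB1, mul_comm z (B-1)] at hz
  have hz0 : 0 < z := by nlinarith
  have hza : a - 1 < z := by nlinarith
  have hden : 0 < z - (a - 1) := by linarith
  set C : ℝ := z / (z - (a - 1)) with hC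
  have hC1 : 1 < C := by
    rw [hC, lt_div_iff₀ hden]; linarith
  have hCB : C < B := by
    rw [hC, div_lt_iff₀ hden]; nlinarith
  have hCz : (C - 1) * z = C * (a - 1) := by
    rw [hC]; field_simp; ring
  -- integrability of t^(s-1) e^(-t) on Ioi z
  have hint : ∀ s : ℝ, 0 < s →
      IntegrableOn (fun t : ℝ => t ^ (s - 1) * Real.exp (-t)) (Ioi z) := by
    intro s hs
    have h1 := (Real.GammaIntegral_convergent hs).mono_set (Ioi_subset_Ioi hz0.le)
    exact h1.congr_fun (fun t _ => mul_comm _ _) measurableSet_Ioi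
  -- the comparison function F and its derivative
  set F : ℝ → ℝ := fun t => -C * (t ^ (a - 1) * Real.exp (-t)) with hF
  set D : ℝ → ℝ := fun t =>
    -C * ((a - 1) * t ^ (a - 2) * Real.exp (-t) + t ^ (a - 1) * (Real.exp (-t) * (-1))) with hD
  have hderiv : ∀ t : ℝ, 0 < t → HasDerivAt F (D t) t := by
    intro t ht0
    have h1 : HasDerivAt (fun t : ℝ => t ^ (a - 1)) ((a - 1) * t ^ (a - 1 - 1)) t :=
      Real.hasDerivAt_rpow_const (Or.inl ht0.ne')
    have h2 : HasDerivAt (fun t : ℝ => Real.exp (-t)) (Real.exp (-t) * (-1)) t :=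
      (Real.hasDerivAt_exp (-t)).comp t (hasDerivAt_neg t)
    have h3 := (h1.mul h2).const_mul (-C)
    have he : a - 1 - 1 = a - 2 := by ring
    rw [he] at h3
    exact h3
  have hDint : IntegrableOn D (Ioi z) := by
    have i1 : IntegrableOn (fun t : ℝ => t ^ (a - 1 - 1) * Real.exp (-t)) (Ioi z) :=
      hint (a - 1) ha1
    have he : a - 1 - 1 = a - 2 := by ring
    rw [he] at i1
    have i2 : IntegrableOn (fun t : ℝ => t ^ (a - 1) * Real.exp (-t)) (Ioi z) :=
      hint a (by linarith)
    have e1 : IntegrableOn (fun t : ℝ => -C * (a - 1) * (t ^ (a - 2) * Real.exp (-t))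
        + C * (t ^ (a - 1) * Real.exp (-t))) (Ioi z) :=
      (i1.const_mul (-C * (a - 1))).add (i2.const_mul C)
    refine IntegrableOn.congr_fun e1 (fun t _ => ?_) measurableSet_Ioi
    simp only [hD]; ring
  have hcont : ContinuousWithinAt F (Ici z) z :=
    (hderiv z hz0).continuousAt.continuousWithinAt
  have htend : Tendsto F atTop (𝓝 0) := by
    have h0 := tendsto_rpow_mul_exp_neg_mul_atTop_nhds_zero (a - 1) 1 one_pos
    simp only [neg_one_mul, one_mul] at h0
    have h1 := h0.const_mul (-C)
    rw [mul_zero] at h1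
    exact h1.congr (fun k => by simp only [hF])
  have hFTC : ∫ t in Ioi z, D t = 0 - F z :=
    integral_Ioi_of_hasDerivAt_of_tendsto hcont
      (fun t ht => hderiv t (lt_trans hz0 ht)) hDint htend
  -- pointwise bound
  have hpt : ∀ t ∈ Ioi z, t ^ (a - 1) * Real.exp (-t) ≤ D t := by
    intro t ht
    have ht0 : (0:ℝ) < t := lt_trans hz0 ht
    have hsplit : t ^ (a - 1) = t ^ (a - 2) * t := by
      rw [show a - 1 = (a - 2) + 1 by ring, Real.rpow_add ht0, Real.rpow_one]
    have hle : C * (a - 1) ≤ (C - 1) * t := by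
      rw [← hCz]
      have : z ≤ t := le_of_lt ht
      nlinarith
    have hpow : 0 < t ^ (a - 2) := Real.rpow_pos_of_pos ht0 _
    have hexp : 0 < Real.exp (-t) := Real.exp_pos _
    have key : t ^ (a - 1) ≤ C * t ^ (a - 1) - C * (a - 1) * t ^ (a - 2) := by
      rw [hsplit]
      nlinarith [mul_le_mul_of_nonneg_left hle hpow.le]
    calc t ^ (a - 1) * Real.exp (-t)
        ≤ (C * t ^ (a - 1) - C * (a - 1) * t ^ (a - 2)) * Real.exp (-t) := by
          exact mul_le_mul_of_nonneg_right key hexp.le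
      _ = D t := by simp only [hD]; ring
  have hmono : uGamma a z ≤ ∫ t in Ioi z, D t := by
    exact setIntegral_mono_on (hint a (by linarith)) hDint measurableSet_Ioi hpt
  have hFz : 0 - F z = C * (z ^ (a - 1) * Real.exp (-z)) := by
    simp only [hF]; ring
  have hpos : 0 < z ^ (a - 1) * Real.exp (-z) :=
    mul_pos (Real.rpow_pos_of_pos hz0 _) (Real.exp_pos _)
  calc uGamma a z ≤ C * (z ^ (a - 1) * Real.exp (-z)) := by rw [← hFz, ← hFTC]; exact hmono
    _ < B * (z ^ (a - 1) * Real.exp (-z)) := by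
        exact mul_lt_mul_of_pos_right hCB hpos
    _ = B * z ^ (a - 1) * Real.exp (-z) := by ring
end

section
/- Let $(X_1, X_2)$ be uniformly distributed on the ellipse $A = \{x \in \mathbb{R}^2 : x^T K x \le 1\}$ where $K$ is a symmetric positive definite $2\times 2$ matrix. Then the mutual information is $I(X_1; X_2) = \log_2\big( \pi e^{-1} \sqrt{K_{11} K_{22} / \det K} \big)$. -/
/-!
Completing the square shows that every slice `{s | (t, s) ∈ A}` of the ellipse is an interval of
length `(2 / √(K 1 1)) √(1 - (t / a)²)` with `a = √(K 1 1 / det K)`, so the marginal of `X₁` is the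
semicircle law of radius `a`, and `A` has area `π / √(det K)`. The substitution `u = cos θ` and
an integration by parts against `∫₀^π log sin = -π log 2` give the semicircle law the differential
entropy `log (π a / √e)`; adding the two marginal entropies and subtracting `log (π / √(det K))`
gives the formula.
-/

open MeasureTheory Set Matrix Real

theorem integral_sin_sq_mul_log_sin :
    ∫ x in (0 : ℝ)..π, sin x ^ 2 * log (sin x) = π / 4 - π / 2 * log 2 := by
  have hsin_log : Continuous fun x => sin x * log (sin x) :=
    continuous_mul_log.comp continuous_sin
  have hint : IntervalIntegrable (fun x => sin x ^ 2 * log (sin x)) volume 0 π :=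
    ((continuous_sin.fun_mul hsin_log).congr fun x => by ring).intervalIntegrable _ _
  have hlog : IntervalIntegrable (fun x => log (sin x)) volume 0 π := intervalIntegrable_log_sin
  have hcos : IntervalIntegrable (fun x => cos x ^ 2) volume 0 π :=
    (continuous_cos.pow 2).intervalIntegrable _ _
  -- `cos x * (sin x * log (sin x))` is an antiderivative vanishing at both ends
  have hderiv : ∫ x in (0 : ℝ)..π,
      (log (sin x) - 2 * (sin x ^ 2 * log (sin x)) + cos x ^ 2) = 0 := by
    rw [intervalIntegral.integral_eq_sub_of_hasDerivAt_of_le pi_pos.le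
      (continuous_cos.mul hsin_log).continuousOn (f := fun x => cos x * (sin x * log (sin x)))]
    · simp
    · intro x hx
      have hsin : sin x ≠ 0 := (sin_pos_of_pos_of_lt_pi hx.1 hx.2).ne'
      refine ((hasDerivAt_cos x).fun_mul ((hasDerivAt_sin x).fun_mul
        ((hasDerivAt_sin x).log hsin))).congr_deriv ?_
      rw [mul_div_cancel₀ _ hsin]
      linear_combination log (sin x) * sin_sq_add_cos_sq x
    · exact (hlog.sub (hint.const_mul 2)).add hcos
  rw [intervalIntegral.integral_add (hlog.sub (hint.const_mul 2)) hcos,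
    intervalIntegral.integral_sub hlog (hint.const_mul 2),
    intervalIntegral.integral_const_mul, integral_log_sin_zero_pi, integral_cos_sq] at hderiv
  simp only [cos_pi, sin_pi, cos_zero, sin_zero, mul_zero, sub_self, zero_add, sub_zero] at hderiv
  linarith

theorem integral_sqrt_one_sub_sq_mul_log_sqrt :
    ∫ x in (-1 : ℝ)..1, √(1 - x ^ 2) * log √(1 - x ^ 2) = π / 4 - π / 2 * log 2 := by
  have hsubst := intervalIntegral.integral_comp_mul_deriv (a := 0) (b := π)
    (fun x _ => hasDerivAt_cos x) continuous_sin.neg.continuousOn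
    (g := fun u => √(1 - u ^ 2) * log √(1 - u ^ 2))
    (continuous_mul_log.comp (by fun_prop))
  rw [cos_zero, cos_pi, intervalIntegral.integral_symm (-1 : ℝ) 1] at hsubst
  rw [← neg_eq_iff_eq_neg.mpr hsubst, ← integral_sin_sq_mul_log_sin,
    ← intervalIntegral.integral_neg]
  refine intervalIntegral.integral_congr fun x hx => ?_
  rw [uIcc_of_le pi_pos.le] at hx
  have hsin : √(1 - cos x ^ 2) = sin x := by
    rw [← sin_sq, sqrt_sq (sin_nonneg_of_nonneg_of_le_pi hx.1 hx.2)]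
  simp only [Function.comp_apply, hsin]
  ring

theorem integral_sqrt_one_sub_sq_mul (g : ℝ → ℝ) :
    ∫ x, √(1 - x ^ 2) * g x = ∫ x in (-1 : ℝ)..1, √(1 - x ^ 2) * g x := by
  rw [intervalIntegral.integral_of_le (by norm_num),
    ← setIntegral_eq_integral_of_forall_compl_eq_zero]
  intro x hx
  rw [sqrt_eq_zero'.2, zero_mul]
  simp only [mem_Ioc, not_and_or, not_lt, not_le] at hx
  rcases hx with hx | hx <;> nlinarith

theorem integral_sqrt_one_sub_div_sq {a : ℝ} (ha : 0 < a) :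
    ∫ t, √(1 - (t / a) ^ 2) = π * a / 2 := by
  rw [Measure.integral_comp_div (fun u => √(1 - u ^ 2)), abs_of_pos ha, smul_eq_mul]
  have h := integral_sqrt_one_sub_sq_mul 1
  simp only [Pi.one_apply, mul_one] at h
  rw [h, integral_sqrt_one_sub_sq]
  ring

noncomputable def semicircleDensity (a t : ℝ) : ℝ := 2 / (π * a) * √(1 - (t / a) ^ 2)

theorem integral_semicircleDensity_mul_log {a : ℝ} (ha : 0 < a) :
    ∫ t, semicircleDensity a t * log (semicircleDensity a t) = 1 / 2 - log (π * a) := by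
  set c := 2 / (π * a)
  have hc : 0 < c := by positivity
  have hsplit (u : ℝ) : c * √(1 - u ^ 2) * log (c * √(1 - u ^ 2))
      = √(1 - u ^ 2) * (c * log c + c * log √(1 - u ^ 2)) := by
    rcases eq_or_ne √(1 - u ^ 2) 0 with h | h
    · simp [h]
    · rw [log_mul hc.ne' h]; ring
  have hcont : Continuous fun u : ℝ => √(1 - u ^ 2) := by fun_prop
  have hcont_log : Continuous fun u : ℝ => √(1 - u ^ 2) * log √(1 - u ^ 2) :=
    continuous_mul_log.comp hcont
  simp only [semicircleDensity]
  rw [Measure.integral_comp_div (fun u => c * √(1 - u ^ 2) * log (c * √(1 - u ^ 2))),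
    abs_of_pos ha, smul_eq_mul]
  simp only [hsplit]
  rw [integral_sqrt_one_sub_sq_mul, intervalIntegral.integral_congr (g := fun u =>
      c * log c * √(1 - u ^ 2) + c * (√(1 - u ^ 2) * log √(1 - u ^ 2))) fun u _ => by ring,
    intervalIntegral.integral_add ((hcont.intervalIntegrable _ _).const_mul _)
      ((hcont_log.intervalIntegrable _ _).const_mul c),
    intervalIntegral.integral_const_mul, intervalIntegral.integral_const_mul,
    integral_sqrt_one_sub_sq, integral_sqrt_one_sub_sq_mul_log_sqrt,
    log_div two_ne_zero (by positivity)]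
  have hca : c * (π * a) = 2 := div_mul_cancel₀ _ (by positivity)
  linear_combination (1 / 2 * (log 2 - log (π * a)) + 1 / 4 - 1 / 2 * log 2) * hca

theorem neg_integral_semicircleDensity_mul_logb {a : ℝ} (ha : 0 < a) (b : ℝ) :
    -∫ t, semicircleDensity a t * logb b (semicircleDensity a t)
      = logb b (π * a * exp (-(1 / 2))) := by
  simp only [logb, mul_div_assoc']
  rw [integral_div, integral_semicircleDensity_mul_log ha,
    log_mul (by positivity) (exp_pos _).ne', log_exp]
  ring

def ellipse (p q r : ℝ) : Set (Fin 2 → ℝ) :=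
  {x | p * x 0 ^ 2 + 2 * q * x 0 * x 1 + r * x 1 ^ 2 ≤ 1}

theorem measurableSet_ellipse (p q r : ℝ) : MeasurableSet (ellipse p q r) :=
  (isClosed_le (by fun_prop) continuous_const).measurableSet

theorem setOf_dotProduct_mulVec_le_one_eq_ellipse {K : Matrix (Fin 2) (Fin 2) ℝ}
    (hK : K.IsHermitian) : {x | x ⬝ᵥ K *ᵥ x ≤ 1} = ellipse (K 0 0) (K 0 1) (K 1 1) := by
  have hsymm : K 1 0 = K 0 1 := hK.apply 0 1
  ext x
  simp only [ellipse, mem_ofPred_eq, dotProduct, mulVec, Fin.sum_univ_two, hsymm]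
  ring_nf

theorem setOf_vecCons_mem_ellipse_swap (p q r t : ℝ) :
    {s | ![s, t] ∈ ellipse p q r} = {s | ![t, s] ∈ ellipse r q p} := by
  ext s
  simp only [ellipse, mem_ofPred_eq, Matrix.cons_val_zero, Matrix.cons_val_one]
  ring_nf

theorem volume_setOf_add_sq_le (c e : ℝ) :
    volume {s : ℝ | (s + c) ^ 2 ≤ e} = ENNReal.ofReal (2 * √e) := by
  rcases lt_or_ge e 0 with he | he
  · rw [sqrt_eq_zero_of_nonpos he.le, mul_zero, ENNReal.ofReal_zero, measure_eq_zero_iff_ae_notMem]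
    exact Filter.Eventually.of_forall fun s hs => (sq_nonneg (s + c)).not_gt (hs.trans_lt he)
  · have hIcc : {s : ℝ | (s + c) ^ 2 ≤ e} = Icc (-√e - c) (√e - c) := by
      ext s
      simp only [mem_ofPred_eq, mem_Icc, Real.sq_le he]
      constructor <;> rintro ⟨h1, h2⟩ <;> constructor <;> linarith
    rw [hIcc, Real.volume_Icc]
    ring_nf

theorem volume_setOf_vecCons_mem_ellipse {p q r D : ℝ} (hr : 0 < r) (hD : 0 < D)
    (hdisc : p * r - q ^ 2 = D) (t : ℝ) :
    volume {s | ![t, s] ∈ ellipse p q r}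
      = ENNReal.ofReal (2 / √r * √(1 - (t / (√r / √D)) ^ 2)) := by
  have hslice : {s | ![t, s] ∈ ellipse p q r}
      = {s | (s + q * t / r) ^ 2 ≤ (1 - (t / (√r / √D)) ^ 2) / r} := by
    ext s
    simp only [ellipse, mem_ofPred_eq, Matrix.cons_val_zero, Matrix.cons_val_one, div_pow,
      sq_sqrt hr.le, sq_sqrt hD.le, le_div_iff₀ hr]
    have hcomplete : (s + q * t / r) ^ 2 * r - (1 - t ^ 2 / (r / D))
        = p * t ^ 2 + 2 * q * t * s + r * s ^ 2 - 1 := by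
      rw [← hdisc]; field_simp; ring
    constructor <;> intro h <;> linarith
  rw [hslice, volume_setOf_add_sq_le, sqrt_div' _ hr.le]
  ring_nf

theorem volume_eq_lintegral_volume_slice {E : Set (Fin 2 → ℝ)} (hE : MeasurableSet E) :
    volume E = ∫⁻ t, volume {s : ℝ | ![t, s] ∈ E} := by
  rw [← (volume_preserving_finTwoArrow ℝ).symm.measure_preimage hE.nullMeasurableSet,
    Measure.volume_eq_prod, Measure.prod_apply (MeasurableEquiv.finTwoArrow.symm.measurable hE)]
  rfl

theorem volume_ellipse {p q r D : ℝ} (hr : 0 < r) (hD : 0 < D) (hdisc : p * r - q ^ 2 = D) :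
    volume (ellipse p q r) = ENNReal.ofReal (π / √D) := by
  have ha : 0 < √r / √D := by positivity
  have hint : Integrable fun t => √(1 - (t / (√r / √D)) ^ 2) :=
    Integrable.of_integral_ne_zero (by rw [integral_sqrt_one_sub_div_sq ha]; positivity)
  rw [volume_eq_lintegral_volume_slice (measurableSet_ellipse p q r),
    lintegral_congr (volume_setOf_vecCons_mem_ellipse hr hD hdisc),
    ← ofReal_integral_eq_lintegral_ofReal (hint.const_mul _)
      (Filter.Eventually.of_forall fun t => by positivity),
    integral_const_mul, integral_sqrt_one_sub_div_sq ha]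
  congr 1
  field_simp

theorem toReal_volume_setOf_vecCons_mem_ellipse_div {p q r D : ℝ} (hr : 0 < r) (hD : 0 < D)
    (hdisc : p * r - q ^ 2 = D) (t : ℝ) :
    (volume {s | ![t, s] ∈ ellipse p q r}).toReal / (π / √D) = semicircleDensity (√r / √D) t := by
  rw [volume_setOf_vecCons_mem_ellipse hr hD hdisc, ENNReal.toReal_ofReal (by positivity),
    semicircleDensity]
  field_simp

theorem ellipse_mutual_information (K : Matrix (Fin 2) (Fin 2) ℝ) (hK : K.PosDef) :
    let A : Set (Fin 2 → ℝ) := {x | x ⬝ᵥ K.mulVec x ≤ 1}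
    let f₁ : ℝ → ℝ := fun t =>
      (volume {s : ℝ | (![t, s] : Fin 2 → ℝ) ∈ A}).toReal / (volume A).toReal
    let f₂ : ℝ → ℝ := fun t =>
      (volume {s : ℝ | (![s, t] : Fin 2 → ℝ) ∈ A}).toReal / (volume A).toReal
    (-∫ t, f₁ t * Real.logb 2 (f₁ t)) + (-∫ t, f₂ t * Real.logb 2 (f₂ t))
        - Real.logb 2 (volume A).toReal
      = Real.logb 2 (π * (Real.exp 1)⁻¹ * Real.sqrt (K 0 0 * K 1 1 / K.det)) := by
  intro A f₁ f₂
  have hdisc : K 0 0 * K 1 1 - K 0 1 ^ 2 = K.det := by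
    rw [det_fin_two, ← hK.1.apply 1 0, star_trivial]; ring
  set D := K.det
  have hD : 0 < D := hK.det_pos
  have h₀₀ : 0 < K 0 0 := hK.diag_pos
  have h₁₁ : 0 < K 1 1 := hK.diag_pos
  have hdisc' : K 1 1 * K 0 0 - K 0 1 ^ 2 = D := by rw [mul_comm, hdisc]
  have hA : A = ellipse (K 0 0) (K 0 1) (K 1 1) := setOf_dotProduct_mulVec_le_one_eq_ellipse hK.1
  have hvol : (volume A).toReal = π / √D := by
    rw [hA, volume_ellipse h₁₁ hD hdisc, ENNReal.toReal_ofReal (by positivity)]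
  have hf₁ : f₁ = semicircleDensity (√(K 1 1) / √D) := by
    ext t
    simp only [f₁]
    rw [hvol, hA, toReal_volume_setOf_vecCons_mem_ellipse_div h₁₁ hD hdisc]
  have hf₂ : f₂ = semicircleDensity (√(K 0 0) / √D) := by
    ext t
    simp only [f₂]
    rw [hvol, hA, setOf_vecCons_mem_ellipse_swap,
      toReal_volume_setOf_vecCons_mem_ellipse_div h₀₀ hD hdisc']
  rw [hf₁, hf₂, hvol, neg_integral_semicircleDensity_mul_logb (by positivity),
    neg_integral_semicircleDensity_mul_logb (by positivity),
    ← logb_mul (by positivity) (by positivity), ← logb_div (by positivity) (by positivity)]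
  congr 1
  have hexp : exp (-(1 / 2)) * exp (-(1 / 2)) = (exp 1)⁻¹ := by
    rw [← Real.exp_add, ← Real.exp_neg]; norm_num
  rw [sqrt_div' _ hD.le, sqrt_mul h₀₀.le, ← hexp]
  field_simp
end

section
/- Let $W$ be a discrete random variable taking $N$ values whose probability mass function satisfies $p(w) \ge \delta$ for every $w$, where $0 < \delta \le 1/N$. Then $H(W) \ge \delta (N-1) \log_2(1/\delta)$. -/
/-!
Coordinatewise, `x ↦ -x log x - (1 - x) δ log (1/δ)` is concave on `[δ, 1]` and nonnegative at
both endpoints (it equals `δ² log (1/δ)` at `δ` and `0` at `1`), hence nonnegative in between.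
Summing `-p log p ≥ (1 - p) δ log (1/δ)` over the `N` outcomes gives `(N - 1) δ log (1/δ)`.
-/

open Real

theorem one_sub_mul_negMulLog_le_negMulLog {δ x : ℝ} (hδ : 0 ≤ δ) (hδx : δ ≤ x) (hx : x ≤ 1) :
    (1 - x) * negMulLog δ ≤ negMulLog x := by
  have hδ1 : 0 ≤ negMulLog δ := negMulLog_nonneg hδ (hδx.trans hx)
  have hg : ConcaveOn ℝ (Set.Ici 0) fun y ↦ negMulLog y - (1 - y) * negMulLog δ := by
    have h := (concaveOn_negMulLog.add ((concaveOn_id (convex_Ici 0)).smul hδ1)).add_const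
      (-negMulLog δ)
    refine h.congr fun y _ ↦ ?_
    simp only [Pi.add_apply, id, smul_eq_mul]
    ring
  have hx_mem : x ∈ segment ℝ δ 1 := by
    rw [segment_eq_Icc (hδx.trans hx)]
    exact ⟨hδx, hx⟩
  have h := hg.ge_on_segment (Set.mem_Ici.2 hδ) (Set.mem_Ici.2 zero_le_one) hx_mem
  rw [negMulLog_one, sub_self, zero_mul, sub_zero] at h
  rcases min_le_iff.1 h with h | h <;> nlinarith [mul_nonneg hδ hδ1]

theorem card_sub_one_mul_negMulLog_le_sum_negMulLog {ι : Type*} [Fintype ι] {p : ι → ℝ} {δ : ℝ}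
    (hδ : 0 ≤ δ) (hp : ∀ i, δ ≤ p i) (hsum : ∑ i, p i = 1) :
    (Fintype.card ι - 1) * negMulLog δ ≤ ∑ i, negMulLog (p i) := by
  have hp_le_one (i : ι) : p i ≤ 1 :=
    hsum ▸ Finset.single_le_sum (fun j _ ↦ hδ.trans (hp j)) (Finset.mem_univ i)
  calc (Fintype.card ι - 1) * negMulLog δ = ∑ i, (1 - p i) * negMulLog δ := by
        rw [← Finset.sum_mul, Finset.sum_sub_distrib, hsum]
        simp
    _ ≤ ∑ i, negMulLog (p i) := Finset.sum_le_sum fun i _ ↦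
        one_sub_mul_negMulLog_le_negMulLog hδ (hp i) (hp_le_one i)

theorem entropy_lower_bound_general (N : ℕ) (p : Fin N → ℝ) (δ : ℝ)
    (hδ0 : 0 < δ)
    (hsum : ∑ w, p w = 1) (hlb : ∀ w, δ ≤ p w) :
    -∑ w, p w * Real.logb 2 (p w) ≥ δ * ((N : ℝ) - 1) * Real.logb 2 (1 / δ) := by
  have hentropy : -∑ w, p w * logb 2 (p w) = (∑ w, negMulLog (p w)) / log 2 := by
    simp only [negMulLog, logb, Finset.sum_div, ← Finset.sum_neg_distrib]
    congr 1 with w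
    ring
  have hbound : δ * ((N : ℝ) - 1) * logb 2 (1 / δ) = (N - 1) * negMulLog δ / log 2 := by
    rw [negMulLog, logb, one_div, log_inv]
    ring
  rw [ge_iff_le, hentropy, hbound]
  gcongr
  simpa using card_sub_one_mul_negMulLog_le_sum_negMulLog hδ0.le hlb hsum

theorem entropy_lower_bound (N : ℕ) (p : Fin N → ℝ) (δ : ℝ)
    (hδ0 : 0 < δ) (hδN : δ ≤ 1 / N)
    (hsum : ∑ w, p w = 1) (hlb : ∀ w, δ ≤ p w) :
    -∑ w, p w * Real.logb 2 (p w) ≥ δ * ((N : ℝ) - 1) * Real.logb 2 (1 / δ) :=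
  entropy_lower_bound_general N p δ hδ0 hsum hlb
end
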